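/- Assume d ≤ 2, i.e., (α,α)/(β,β) ≤ 2 for all α, β ∈ Δ, and set Q₁^∨ = Σ_{α ∈ Δ, α short} ℤ α^∨. Then the quotient group (Q₁^∨ + 2Q^∨)/2Q^∨ is an elementary abelian 2-group of order 2^{|Π ∩ Δ_short|}, where |Π ∩ Δ_short| is the number of short simple roots. -/

import Mathlib

open scoped Pointwise

namespace ZetaCenter

variable {V : Type*} [AddCommGroup V] [Module ℚ V]

/-- The coroot `α^∨ = 2α/(α,α)` of a vector `α` with respect to a bilinear form. -/
noncomputable def coroot (B : V →ₗ[ℚ] V →ₗ[ℚ] ℚ) (α : V) : V :=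
  (2 / B α α) • α

/-- `Δ` is a (crystallographic-style) root system in `V` with respect to `B`:
finite, not containing `0`, spanning `V`, and closed under the reflections `s_α`. -/
def IsRootSystem (B : V →ₗ[ℚ] V →ₗ[ℚ] ℚ) (Δ : Set V) : Prop :=
  Δ.Finite ∧ (0 : V) ∉ Δ ∧ Submodule.span ℚ Δ = ⊤ ∧
    ∀ α ∈ Δ, ∀ β ∈ Δ, β - B β (coroot B α) • α ∈ Δ

/-- Crystallographic condition: all pairings `(β, α^∨)` are integers. -/
def IsCrystallographic (B : V →ₗ[ℚ] V →ₗ[ℚ] ℚ) (Δ : Set V) : Prop :=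
  ∀ α ∈ Δ, ∀ β ∈ Δ, ∃ n : ℤ, B β (coroot B α) = n

/-- Reducedness: the only multiples of a root that are roots are `±` itself. -/
def IsReduced (Δ : Set V) : Prop :=
  ∀ α ∈ Δ, ∀ c : ℚ, c • α ∈ Δ → c = 1 ∨ c = -1

/-- Irreducibility: `Δ` admits no decomposition into two orthogonal nonempty parts. -/
def IsIrreducible (B : V →ₗ[ℚ] V →ₗ[ℚ] ℚ) (Δ : Set V) : Prop :=
  Δ.Nonempty ∧ ∀ Δ₁ Δ₂ : Set V, Δ = Δ₁ ∪ Δ₂ →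
    (∀ α ∈ Δ₁, ∀ β ∈ Δ₂, B α β = 0) → Δ₁ = ∅ ∨ Δ₂ = ∅

/-- The Weyl group of `Δ`: the subgroup of `GL(V)` generated by the reflections `s_α`, `α ∈ Δ`. -/
def weylGroup (B : V →ₗ[ℚ] V →ₗ[ℚ] ℚ) (Δ : Set V) : Subgroup (V ≃ₗ[ℚ] V) :=
  Subgroup.closure {w | ∃ α ∈ Δ, ∀ v : V, w v = v - B v (coroot B α) • α}

/-- `Pi` is a base (set of simple roots) of `Δ`: a linearly independent subset such that every
root is a nonnegative-integral or nonpositive-integral combination of elements of `Pi`. -/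
def IsBase (Δ Pi : Set V) : Prop :=
  Pi ⊆ Δ ∧ LinearIndependent ℚ ((↑) : Pi → V) ∧
    ∀ α ∈ Δ, α ∈ AddSubmonoid.closure Pi ∨ -α ∈ AddSubmonoid.closure Pi

/-- The positive system corresponding to the base `Pi`. -/
def positiveRoots (Δ Pi : Set V) : Set V :=
  {α | α ∈ Δ ∧ α ∈ AddSubmonoid.closure Pi}

/-- `β` is a short root of `Δ`. -/
def IsShort (B : V →ₗ[ℚ] V →ₗ[ℚ] ℚ) (Δ : Set V) (β : V) : Prop :=
  β ∈ Δ ∧ ∀ γ ∈ Δ, B β β ≤ B γ γ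

/-- The lattice `{λ ∈ V : (λ, α^∨) ∈ c(α)·ℤ for all α ∈ Δ}`. -/
noncomputable def scaledWeightLattice (B : V →ₗ[ℚ] V →ₗ[ℚ] ℚ) (Δ : Set V) (c : V → ℚ) :
    AddSubgroup V where
  carrier := {lam | ∀ α ∈ Δ, ∃ n : ℤ, B lam (coroot B α) = c α * n}
  zero_mem' := fun α _ => ⟨0, by simp⟩
  add_mem' := by
    intro x y hx hy α hα
    obtain ⟨m, hm⟩ := hx α hα
    obtain ⟨k, hk⟩ := hy α hα
    exact ⟨m + k, by rw [map_add, LinearMap.add_apply, hm, hk]; push_cast; ring⟩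
  neg_mem' := by
    intro x hx α hα
    obtain ⟨m, hm⟩ := hx α hα
    exact ⟨-m, by rw [map_neg, LinearMap.neg_apply, hm]; push_cast; ring⟩

/-- The weight lattice `P` of `Δ`. -/
noncomputable def weightLattice (B : V →ₗ[ℚ] V →ₗ[ℚ] ℚ) (Δ : Set V) : AddSubgroup V :=
  scaledWeightLattice B Δ fun _ => 1

/-- The coroot lattice `Q^∨` of `Δ`. -/
noncomputable def corootLattice (B : V →ₗ[ℚ] V →ₗ[ℚ] ℚ) (Δ : Set V) : AddSubgroup V :=
  AddSubgroup.closure (coroot B '' Δ)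

/-!
The simple coroots are linearly independent and, since every root is reached from a simple root by
simple reflections and negation, they span the coroot lattice `Q^∨` over `ℤ`; so `Q^∨ ≅ ℤ^Π` and
`2Q^∨` is the sublattice of even vectors. If `α` is short and `β` is long, Cauchy–Schwarz and
`|β|² ≤ 2|α|²` force `⟨β, α^∨⟩ ∈ {0, ±2}`. Following a short root along simple reflections, its
coroot therefore keeps even coordinates at the long simple coroots, and `Q₁^∨ + 2Q^∨` is the
lattice of integer vectors that are even at the long simple roots. Its quotient by the even
vectors is `(ℤ/2)^k` with `k` the number of short simple roots.
-/

section Reflection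

variable (B : V →ₗ[ℚ] V →ₗ[ℚ] ℚ)

noncomputable def reflection (α x : V) : V :=
  x - B x (coroot B α) • α

variable {B}

lemma apply_coroot (x α : V) : B x (coroot B α) = 2 / B α α * B x α := by
  simp [coroot]

lemma apply_self_coroot {α : V} (hα : B α α ≠ 0) : B α (coroot B α) = 2 := by
  rw [apply_coroot]; field_simp

lemma coroot_neg (α : V) : coroot B (-α) = -coroot B α := by
  simp [coroot]

lemma reflection_self {α : V} (hα : B α α ≠ 0) : reflection B α α = -α := by
  rw [reflection, apply_self_coroot hα, two_smul, sub_add_cancel_left]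

lemma reflection_reflection {α : V} (hα : B α α ≠ 0) (x : V) :
    reflection B α (reflection B α x) = x := by
  simp only [reflection, map_sub, map_smul, LinearMap.sub_apply, LinearMap.smul_apply,
    smul_eq_mul, apply_self_coroot hα]
  module

lemma apply_reflection_reflection (hsymm : ∀ x y : V, B x y = B y x) {α : V} (hα : B α α ≠ 0)
    (x y : V) : B (reflection B α x) (reflection B α y) = B x y := by
  simp only [reflection, map_sub, map_smul, LinearMap.sub_apply, LinearMap.smul_apply,
    smul_eq_mul, apply_coroot, hsymm α y]
  field_simp
  ring

lemma coroot_reflection (hsymm : ∀ x y : V, B x y = B y x) {α γ : V} (hα : B α α ≠ 0) :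
    coroot B (reflection B α γ) = coroot B γ - B α (coroot B γ) • coroot B α := by
  rw [coroot, apply_reflection_reflection hsymm hα]
  simp only [reflection, coroot, smul_sub, smul_smul, map_smul, smul_eq_mul, hsymm α γ]
  module

end Reflection

/-- Cauchy–Schwarz gives `n m ≤ 4`, while `n |α|² = m |β|²` forces `|m| < |n| ≤ 2|m|` unless
`m = n = 0`; hence `n ∈ {0, ±2}`. -/
lemma even_of_apply_coroot_eq {B : V →ₗ[ℚ] V →ₗ[ℚ] ℚ} (hsymm : ∀ x y : V, B x y = B y x)
    (hnonneg : ∀ x, 0 ≤ B x x) {α β : V} (hα : 0 < B α α) (hlt : B α α < B β β)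
    (hle : B β β ≤ 2 * B α α) {m n : ℤ} (hn : B β (coroot B α) = n)
    (hm : B α (coroot B β) = m) : Even n := by
  have hβ : 0 < B β β := hα.trans hlt
  rw [apply_coroot] at hn hm
  have hnm : (n : ℚ) * B α α = m * B β β := by
    rw [← hn, ← hm, hsymm β α]; field_simp
  have hcs : (n : ℚ) * m ≤ 4 := by
    have hprod : (n : ℚ) * m * (B α α * B β β) = 4 * (B β α * B α β) := by
      rw [← hn, ← hm]; field_simp; ring
    have := LinearMap.BilinForm.apply_mul_apply_le_of_forall_zero_le B hnonneg β α
    nlinarith [mul_pos hα hβ]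
  have hcs' : n * m ≤ 4 := by exact_mod_cast hcs
  rcases lt_trichotomy m 0 with hm0 | rfl | hm0
  · have hm0' : (m : ℚ) < 0 := by exact_mod_cast hm0
    have h1 : n < m := by
      have : (n : ℚ) < m := by nlinarith [mul_lt_mul_of_neg_left hlt hm0']
      exact_mod_cast this
    have h2 : 2 * m ≤ n := by
      have : 2 * (m : ℚ) ≤ n := by nlinarith [mul_le_mul_of_nonpos_left hle hm0'.le]
      exact_mod_cast this
    exact ⟨-1, by nlinarith⟩
  · have : (n : ℚ) = 0 := by simpa [hα.ne'] using hnm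
    exact ⟨0, by exact_mod_cast this⟩
  · have hm0' : (0 : ℚ) < m := by exact_mod_cast hm0
    have h1 : m < n := by
      have : (m : ℚ) < n := by nlinarith [mul_lt_mul_of_pos_left hlt hm0']
      exact_mod_cast this
    have h2 : n ≤ 2 * m := by
      have : (n : ℚ) ≤ 2 * m := by nlinarith [mul_le_mul_of_nonneg_left hle hm0'.le]
      exact_mod_cast this
    exact ⟨1, by nlinarith⟩

section RootSystem

variable {B : V →ₗ[ℚ] V →ₗ[ℚ] ℚ} {Δ : Set V}

lemma IsRootSystem.apply_self_pos (hpos : ∀ v : V, v ≠ 0 → 0 < B v v)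
    (hRS : IsRootSystem B Δ) {α : V} (hα : α ∈ Δ) : 0 < B α α :=
  hpos α fun h => hRS.2.1 (h ▸ hα)

lemma IsRootSystem.reflection_mem (hRS : IsRootSystem B Δ) {α β : V} (hα : α ∈ Δ)
    (hβ : β ∈ Δ) : reflection B α β ∈ Δ :=
  hRS.2.2.2 α hα β hβ

lemma IsRootSystem.neg_mem (hpos : ∀ v : V, v ≠ 0 → 0 < B v v) (hRS : IsRootSystem B Δ)
    {α : V} (hα : α ∈ Δ) : -α ∈ Δ := by
  simpa [reflection_self (hRS.apply_self_pos hpos hα).ne'] using hRS.reflection_mem hα hα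

lemma IsShort.of_apply_self_eq {α β : V} (hα : IsShort B Δ α) (hβ : β ∈ Δ)
    (h : B β β = B α α) : IsShort B Δ β :=
  ⟨hβ, fun γ hγ => h ▸ hα.2 γ hγ⟩

end RootSystem

namespace IsBase

variable {Δ Pi : Set V}

section Basis

variable (hbase : IsBase Δ Pi) (hspan : Submodule.span ℚ Δ = ⊤)
include hbase hspan

noncomputable def basis : Module.Basis Pi ℚ V :=
  Module.Basis.mk hbase.2.1 <| by
    have hcl : AddSubmonoid.closure Pi ≤ (Submodule.span ℚ Pi).toAddSubmonoid :=
      AddSubmonoid.closure_le.mpr Submodule.subset_span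
    rw [Subtype.range_coe, ← hspan, Submodule.span_le]
    intro α hα
    rcases hbase.2.2 α hα with h | h
    · exact hcl h
    · exact neg_neg α ▸ neg_mem (hcl h)

@[simp]
lemma basis_apply (i : Pi) : hbase.basis hspan i = i :=
  Module.Basis.mk_apply _ _ _

lemma basis_repr_of_mem {j : V} (hj : j ∈ Pi) :
    (hbase.basis hspan).repr j = Finsupp.single ⟨j, hj⟩ 1 := by
  simpa using (hbase.basis hspan).repr_self ⟨j, hj⟩

lemma repr_nonneg_of_mem_closure {x : V} (hx : x ∈ AddSubmonoid.closure Pi) (i : Pi) :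
    0 ≤ (hbase.basis hspan).repr x i := by
  classical
  induction hx using AddSubmonoid.closure_induction with
  | mem γ hγ =>
    rw [hbase.basis_repr_of_mem hspan hγ, Finsupp.single_apply]
    split_ifs <;> norm_num
  | zero => simp
  | add x y _ _ hx hy => simpa using add_nonneg hx hy

lemma exists_pos_apply_of_mem_closure {B : V →ₗ[ℚ] V →ₗ[ℚ] ℚ} {x : V}
    (hx : x ∈ AddSubmonoid.closure Pi) (hxx : 0 < B x x) : ∃ j ∈ Pi, 0 < B x j := by
  by_contra! h
  set b := hbase.basis hspan
  have hsum : B x x = (b.repr x).sum fun i c => c * B x i := by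
    nth_rw 2 [← b.linearCombination_repr x]
    simp [Finsupp.linearCombination_apply, map_finsuppSum, b]
  refine hxx.not_ge (hsum ▸ Finset.sum_nonpos fun i _ => ?_)
  exact mul_nonpos_of_nonneg_of_nonpos (hbase.repr_nonneg_of_mem_closure hspan hx i) (h i i.2)

/-- Otherwise all coordinates of `α` but the `j`-th would vanish, making `α` a multiple of `j`. -/
lemma sub_smul_mem_closure (hred : IsReduced Δ) {α j : V} (hα : α ∈ positiveRoots Δ Pi)
    (hαPi : α ∉ Pi) (hj : j ∈ Pi) {t : ℚ} (ht : α - t • j ∈ Δ) :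
    α - t • j ∈ AddSubmonoid.closure Pi := by
  classical
  refine (hbase.2.2 _ ht).resolve_right fun hneg => ?_
  set b := hbase.basis hspan
  have hrepr : ∀ i, b.repr α i = b.repr α ⟨j, hj⟩ * b.repr j i := by
    intro i
    rw [hbase.basis_repr_of_mem hspan hj, Finsupp.single_apply]
    split_ifs with hi
    · simp [hi]
    · have h1 := hbase.repr_nonneg_of_mem_closure hspan hα.2 i
      have h2 := hbase.repr_nonneg_of_mem_closure hspan hneg i
      rw [map_neg, map_sub, map_smul, hbase.basis_repr_of_mem hspan hj] at h2
      simp only [Finsupp.neg_apply, Finsupp.sub_apply, Finsupp.smul_apply,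
        Finsupp.single_apply, if_neg hi, smul_zero, sub_zero] at h2
      simp only [mul_zero]
      linarith
  have hαj : α = b.repr α ⟨j, hj⟩ • j := b.ext_elem_iff.mpr fun i => by
    rw [hrepr i, map_smul, Finsupp.smul_apply, smul_eq_mul]
  rcases hred j (hbase.1 hj) _ (hαj ▸ hα.1) with h | h
  · exact hαPi (by rwa [hαj, h, one_smul])
  · have := hbase.repr_nonneg_of_mem_closure hspan hα.2 ⟨j, hj⟩
    linarith

end Basis

/-- A positive non-simple root pairs positively with some simple root, whose reflection lowers its
height. -/
theorem induction_on {B : V →ₗ[ℚ] V →ₗ[ℚ] ℚ} (hpos : ∀ v : V, v ≠ 0 → 0 < B v v)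
    (hRS : IsRootSystem B Δ) (hred : IsReduced Δ) (hbase : IsBase Δ Pi) {p : V → Prop}
    (simple : ∀ α ∈ Pi, p α) (neg : ∀ α ∈ Δ, p α → p (-α))
    (reflect : ∀ α ∈ Δ, ∀ j ∈ Pi, p α → p (reflection B j α)) : ∀ α ∈ Δ, p α := by
  have hspan := hRS.2.2.1
  set b := hbase.basis hspan
  have hwf : (positiveRoots Δ Pi).WellFoundedOn fun x y => b.sumCoords x < b.sumCoords y :=
    Set.wellFoundedOn_image.mp ((hRS.1.subset fun _ h => h.1).image _).wellFoundedOn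
  have hpositive : ∀ α ∈ positiveRoots Δ Pi, p α := by
    intro α hα
    refine hwf.induction hα fun α hα ih => ?_
    by_cases hαPi : α ∈ Pi
    · exact simple α hαPi
    obtain ⟨j, hj, hαj⟩ :=
      hbase.exists_pos_apply_of_mem_closure hspan hα.2 (hRS.apply_self_pos hpos hα.1)
    have hjj : 0 < B j j := hRS.apply_self_pos hpos (hbase.1 hj)
    have hβΔ : reflection B j α ∈ Δ := hRS.reflection_mem (hbase.1 hj) hα.1
    have hβ : reflection B j α ∈ positiveRoots Δ Pi :=
      ⟨hβΔ, hbase.sub_smul_mem_closure hspan hred hα hαPi hj hβΔ⟩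
    have hlt : b.sumCoords (reflection B j α) < b.sumCoords α := by
      have hj1 : b.sumCoords j = 1 := by simpa [b] using b.sumCoords_self_apply (i := ⟨j, hj⟩)
      have : 0 < B α (coroot B j) := by rw [apply_coroot]; positivity
      rw [reflection, map_sub, map_smul, hj1, smul_eq_mul, mul_one]
      exact sub_lt_self _ this
    rw [← reflection_reflection hjj.ne' α]
    exact reflect _ hβΔ j hj (ih _ hβ hlt)
  intro α hα
  rcases hbase.2.2 α hα with h | h
  · exact hpositive α ⟨hα, h⟩
  · simpa using neg _ (hRS.neg_mem hpos hα) (hpositive _ ⟨hRS.neg_mem hpos hα, h⟩)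

end IsBase

section EvenLattice

variable {ι : Type*}

def evenOutside (S : Set ι) : AddSubgroup (ι → ℤ) :=
  AddSubgroup.pi Sᶜ fun _ => AddSubgroup.zmultiples 2

lemma mem_evenOutside {S : Set ι} {f : ι → ℤ} : f ∈ evenOutside S ↔ ∀ i ∉ S, 2 ∣ f i := by
  simp [evenOutside, AddSubgroup.mem_pi, Int.mem_zmultiples_iff]

lemma evenOutside_mono {S T : Set ι} (h : S ⊆ T) : evenOutside S ≤ evenOutside T :=
  fun _ hf => mem_evenOutside.mpr fun i hi => mem_evenOutside.mp hf i fun hS => hi (h hS)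

lemma index_evenOutside [Fintype ι] (S : Set ι) : (evenOutside S).index = 2 ^ Sᶜ.ncard := by
  classical
  have : evenOutside S =
      AddSubgroup.pi Set.univ fun i => if i ∈ S then ⊤ else AddSubgroup.zmultiples 2 := by
    ext f
    simp only [evenOutside, AddSubgroup.mem_pi]
    refine ⟨fun h i _ => ?_, fun h i hi => by simpa [show i ∉ S from hi] using h i trivial⟩
    split_ifs with hi
    · exact AddSubgroup.mem_top _
    · exact h i hi
  rw [this, AddSubgroup.index_pi]
  simp [apply_ite, Finset.prod_ite, ← Set.ncard_coe_finset, Set.compl_def]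

lemma relIndex_evenOutside_empty [Finite ι] (S : Set ι) :
    (evenOutside ∅).relIndex (evenOutside S) = 2 ^ S.ncard := by
  have := Fintype.ofFinite ι
  have h := AddSubgroup.relIndex_mul_index (evenOutside_mono (Set.empty_subset S))
  rw [index_evenOutside, index_evenOutside, Set.compl_empty, Set.ncard_univ,
    ← Set.ncard_add_ncard_compl S, pow_add] at h
  exact Nat.eq_of_mul_eq_mul_right (by positivity) h

end EvenLattice

section CorootLattice

variable {B : V →ₗ[ℚ] V →ₗ[ℚ] ℚ} {Δ Pi : Set V}

lemma even_apply_coroot_of_isShort (hsymm : ∀ x y : V, B x y = B y x)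
    (hpos : ∀ v : V, v ≠ 0 → 0 < B v v) (hRS : IsRootSystem B Δ) (hcrys : IsCrystallographic B Δ)
    (hd2 : ∀ α ∈ Δ, ∀ β ∈ Δ, B α α ≤ 2 * B β β) {α β : V} (hα : IsShort B Δ α) (hβ : β ∈ Δ)
    (hβ_long : ¬IsShort B Δ β) {n : ℤ} (hn : B β (coroot B α) = n) : Even n := by
  have hnonneg : ∀ x, 0 ≤ B x x := fun x => by
    rcases eq_or_ne x 0 with rfl | hx
    · simp
    · exact (hpos x hx).le
  have hlt : B α α < B β β :=
    (hα.2 β hβ).lt_of_ne fun h => hβ_long (hα.of_apply_self_eq hβ h.symm)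
  obtain ⟨m, hm⟩ := hcrys β hβ α hα.1
  exact even_of_apply_coroot_eq hsymm hnonneg (hRS.apply_self_pos hpos hα.1) hlt
    (hd2 β hβ α hα.1) hn hm

variable (B Pi) in
noncomputable def corootCombination [Fintype Pi] : (Pi → ℤ) →+ V :=
  (Fintype.linearCombination ℤ fun i : Pi => coroot B i).toAddMonoidHom

variable [Fintype Pi]

lemma corootCombination_apply (f : Pi → ℤ) :
    corootCombination B Pi f = ∑ i, f i • coroot B i :=
  Fintype.linearCombination_apply _ _ _

lemma corootCombination_single [DecidableEq Pi] (i : Pi) (n : ℤ) :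
    corootCombination B Pi (_root_.Pi.single i n) = n • coroot B i :=
  Fintype.linearCombination_apply_single _ _ _ _

lemma corootCombination_injective (hpos : ∀ v : V, v ≠ 0 → 0 < B v v)
    (hRS : IsRootSystem B Δ) (hbase : IsBase Δ Pi) :
    Function.Injective (corootCombination B Pi) := by
  have hli : LinearIndependent ℤ fun i : Pi => coroot B i := by
    have := hbase.2.1.units_smul fun i =>
      Units.mk0 (2 / B i i) (div_ne_zero two_ne_zero (hRS.apply_self_pos hpos (hbase.1 i.2)).ne')
    convert this.restrict_scalars' ℤ
    simp [coroot, Units.smul_def]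
  exact hli.fintypeLinearCombination_injective

section RootData

variable (hsymm : ∀ x y : V, B x y = B y x) (hpos : ∀ v : V, v ≠ 0 → 0 < B v v)
  (hRS : IsRootSystem B Δ) (hred : IsReduced Δ) (hcrys : IsCrystallographic B Δ)
  (hbase : IsBase Δ Pi) (hd2 : ∀ α ∈ Δ, ∀ β ∈ Δ, B α α ≤ 2 * B β β)
include hsymm hpos hRS hred hcrys hbase hd2

/-- The parity condition survives a simple reflection `s_j` because a short root pairs evenly with
a long `j`. -/
lemma exists_corootCombination_eq_coroot :
    ∀ α ∈ Δ, ∃ f, corootCombination B Pi f = coroot B α ∧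
      (IsShort B Δ α → f ∈ evenOutside {i : Pi | IsShort B Δ i}) := by
  classical
  refine hbase.induction_on hpos hRS hred ?_ ?_ ?_
  · intro α hαPi
    refine ⟨_root_.Pi.single ⟨α, hαPi⟩ 1, by simp [corootCombination_single], fun hshort => ?_⟩
    refine mem_evenOutside.mpr fun i hi => ?_
    rw [_root_.Pi.single_apply, if_neg (by rintro rfl; exact hi hshort)]
    exact dvd_zero 2
  · rintro α hα ⟨f, hf, hf_even⟩
    refine ⟨-f, by rw [map_neg, hf, coroot_neg], fun hshort => neg_mem (hf_even ?_)⟩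
    exact hshort.of_apply_self_eq hα (by simp)
  · rintro α hα j hj ⟨f, hf, hf_even⟩
    have hjΔ := hbase.1 hj
    obtain ⟨n, hn⟩ := hcrys α hα j hjΔ
    have hjj := hRS.apply_self_pos hpos hjΔ
    refine ⟨f - n • _root_.Pi.single ⟨j, hj⟩ 1, ?_, fun hshort => ?_⟩
    · rw [map_sub, map_zsmul, corootCombination_single, coroot_reflection hsymm hjj.ne', hf, hn,
        one_smul, Int.cast_smul_eq_zsmul]
    have hshort_α : IsShort B Δ α :=
      hshort.of_apply_self_eq hα (apply_reflection_reflection hsymm hjj.ne' α α).symm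
    refine sub_mem (hf_even hshort_α) (mem_evenOutside.mpr fun i hi => ?_)
    rw [_root_.Pi.smul_apply, _root_.Pi.single_apply, smul_eq_mul]
    split_ifs with hij
    · subst hij
      rw [mul_one]
      exact (even_apply_coroot_of_isShort hsymm hpos hRS hcrys hd2 hshort_α hjΔ hi hn).two_dvd
    · simp

lemma corootLattice_eq_range :
    corootLattice B Δ = (corootCombination B Pi).range := by
  refine le_antisymm ((AddSubgroup.closure_le _).mpr ?_) ?_
  · rintro _ ⟨α, hα, rfl⟩
    obtain ⟨f, hf, -⟩ :=
      exists_corootCombination_eq_coroot hsymm hpos hRS hred hcrys hbase hd2 α hα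
    exact ⟨f, hf⟩
  · rintro _ ⟨f, rfl⟩
    rw [corootCombination_apply]
    exact AddSubgroup.sum_mem _ fun i _ =>
      zsmul_mem (AddSubgroup.subset_closure (Set.mem_image_of_mem _ (hbase.1 i.2))) _

lemma two_smul_corootLattice_eq_map :
    (2 : ℚ) • corootLattice B Δ = (evenOutside ∅).map (corootCombination B Pi) := by
  ext x
  rw [corootLattice_eq_range hsymm hpos hRS hred hcrys hbase hd2,
    AddSubgroup.mem_smul_pointwise_iff_exists]
  constructor
  · rintro ⟨_, ⟨f, rfl⟩, rfl⟩
    refine ⟨f + f, mem_evenOutside.mpr fun i _ => ⟨f i, (two_mul _).symm⟩, ?_⟩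
    rw [map_add, two_smul]
  · rintro ⟨f, hf, rfl⟩
    choose g hg using fun i => mem_evenOutside.mp hf i (Set.notMem_empty i)
    refine ⟨_, ⟨g, rfl⟩, ?_⟩
    rw [two_smul, ← map_add]
    congr 1
    ext i
    rw [hg, two_mul, _root_.Pi.add_apply]

lemma sup_two_smul_corootLattice_eq_map :
    AddSubgroup.closure (coroot B '' {β | IsShort B Δ β}) ⊔ (2 : ℚ) • corootLattice B Δ =
      (evenOutside {i : Pi | IsShort B Δ i}).map (corootCombination B Pi) := by
  classical
  rw [two_smul_corootLattice_eq_map hsymm hpos hRS hred hcrys hbase hd2]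
  refine le_antisymm (sup_le ((AddSubgroup.closure_le _).mpr ?_)
    (AddSubgroup.map_mono (evenOutside_mono (Set.empty_subset _)))) ?_
  · rintro _ ⟨β, hβ, rfl⟩
    obtain ⟨f, hf, hf_even⟩ :=
      exists_corootCombination_eq_coroot hsymm hpos hRS hred hcrys hbase hd2 β hβ.1
    exact ⟨f, hf_even hβ, hf⟩
  · rintro _ ⟨f, hf, rfl⟩
    rw [corootCombination_apply]
    refine AddSubgroup.sum_mem _ fun i _ => ?_
    by_cases hi : IsShort B Δ i
    · have : coroot B i ∈ AddSubgroup.closure (coroot B '' {β | IsShort B Δ β}) :=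
        AddSubgroup.subset_closure (Set.mem_image_of_mem (coroot B) hi)
      exact AddSubgroup.mem_sup_left (zsmul_mem this _)
    · refine AddSubgroup.mem_sup_right ⟨_root_.Pi.single i (f i),
        mem_evenOutside.mpr fun j _ => ?_, corootCombination_single i (f i)⟩
      rw [_root_.Pi.single_apply]
      split_ifs with hji
      · exact hji ▸ mem_evenOutside.mp hf i hi
      · exact dvd_zero 2

end RootData

end CorootLattice

theorem statement5_general
    {V : Type*} [AddCommGroup V] [Module ℚ V]
    (B : V →ₗ[ℚ] V →ₗ[ℚ] ℚ)
    (hsymm : ∀ x y : V, B x y = B y x)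
    (hpos : ∀ v : V, v ≠ 0 → 0 < B v v)
    (Δ : Set V) (hRS : IsRootSystem B Δ) (hred : IsReduced Δ)
    (hcrys : IsCrystallographic B Δ)
    (Pi : Set V) (hbase : IsBase Δ Pi)
    (hd2 : ∀ α ∈ Δ, ∀ β ∈ Δ, B α α ≤ 2 * B β β) :
    (∀ x ∈ AddSubgroup.closure (coroot B '' {β | IsShort B Δ β}) ⊔
        (2 : ℚ) • corootLattice B Δ,
      x + x ∈ (2 : ℚ) • corootLattice B Δ) ∧
    ((2 : ℚ) • corootLattice B Δ).relIndex
        (AddSubgroup.closure (coroot B '' {β | IsShort B Δ β}) ⊔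
          (2 : ℚ) • corootLattice B Δ) =
      2 ^ (Pi ∩ {β | IsShort B Δ β}).ncard := by
  have : Fintype Pi := (hRS.1.subset hbase.1).fintype
  rw [sup_two_smul_corootLattice_eq_map hsymm hpos hRS hred hcrys hbase hd2,
    two_smul_corootLattice_eq_map hsymm hpos hRS hred hcrys hbase hd2]
  refine ⟨?_, ?_⟩
  · rintro _ ⟨f, -, rfl⟩
    exact ⟨f + f, mem_evenOutside.mpr fun i _ => ⟨f i, (two_mul _).symm⟩, map_add _ _ _⟩
  · rw [AddSubgroup.relIndex_map_map_of_injective _ _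
      (corootCombination_injective hpos hRS hbase), relIndex_evenOutside_empty,
      ← Set.ncard_image_of_injective _ Subtype.val_injective]
    exact congrArg (2 ^ ·.ncard) (Subtype.image_preimage_coe Pi {β | IsShort B Δ β})

/-- Assuming `d ≤ 2`, the quotient `(Q₁^∨ + 2Q^∨)/2Q^∨` is an elementary
abelian 2-group of order `2 ^ |Pi ∩ Δ_short|`. -/
theorem statement5
    {V : Type*} [AddCommGroup V] [Module ℚ V] [FiniteDimensional ℚ V]
    (B : V →ₗ[ℚ] V →ₗ[ℚ] ℚ)
    (hsymm : ∀ x y : V, B x y = B y x)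
    (hpos : ∀ v : V, v ≠ 0 → 0 < B v v)
    (Δ : Set V) (hRS : IsRootSystem B Δ) (hred : IsReduced Δ)
    (hcrys : IsCrystallographic B Δ) (hirr : IsIrreducible B Δ)
    (Pi : Set V) (hbase : IsBase Δ Pi)
    (hd2 : ∀ α ∈ Δ, ∀ β ∈ Δ, B α α ≤ 2 * B β β) :
    (∀ x ∈ AddSubgroup.closure (coroot B '' {β | IsShort B Δ β}) ⊔
        (2 : ℚ) • corootLattice B Δ,
      x + x ∈ (2 : ℚ) • corootLattice B Δ) ∧
    ((2 : ℚ) • corootLattice B Δ).relIndex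
        (AddSubgroup.closure (coroot B '' {β | IsShort B Δ β}) ⊔
          (2 : ℚ) • corootLattice B Δ) =
      2 ^ (Pi ∩ {β | IsShort B Δ β}).ncard :=
  statement5_general B hsymm hpos Δ hRS hred hcrys Pi hbase hd2

end ZetaCenter
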